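/- arXiv:1608.05326 — 2 statements merged into one kernel-verified Lean document; each statement's English description precedes it below -/
import Mathlib

section
/- For any $j \neq k$, the commutator of the projection $p_k$ (onto $\phi$ in coordinate $k$) with multiplication by the indicator of $a_{j,k}^{(d)} = \{|x_j - x_k| < N^{-d}\}$ satisfies $\|[\mathds{1}_{a_{j,k}^{(d)}}, p_k]\|_{\mathrm{op}} \le C\|\phi\|_\infty N^{-d}$. -/
/-!
Remove the coordinate `x_k`: on `L²(ℝ^{2(N-1)} × ℝ²)` the projection `p_k` acts as
`Ψ ↦ φ(y) ⟨φ, Ψ(z, ·)⟩`, and the indicator of `a_{j,k}` is `w(z, y) = 𝟙{|z_j - y| < r}`.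
If `‖w(z, ·) φ‖₂ ≤ c` for every `z`, Cauchy–Schwarz in `y` and Tonelli bound both `w p_k` and
`p_k w` by `c`, so the commutator has norm at most `2c`. Since `|φ| ≤ ‖φ‖∞`, one may take
`c = ‖φ‖∞ |B_r|^{1/2} = √π ‖φ‖∞ r`.
-/

open MeasureTheory Function
open scoped ENNReal NNReal

noncomputable section

abbrev Vec : Type := EuclideanSpace ℝ (Fin 2)

/-- Projection onto `φ` in the `k`-th coordinate of `L²(ℝ^{2N})`, at the level of functions. -/
noncomputable def pA (N : ℕ) (φ : Vec → ℂ) (k : Fin N) (Ψ : (Fin N → Vec) → ℂ) :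
    (Fin N → Vec) → ℂ :=
  fun x => φ (x k) * ∫ y : Vec, (starRingEnd ℂ) (φ y) * Ψ (Function.update x k y)

section Slice

variable {α β 𝕜 : Type*} [MeasurableSpace α] [MeasurableSpace β] {μ : Measure α} {ν : Measure β}
  [RCLike 𝕜]

theorem eLpNorm_two_sq_eq_lintegral (f : α → 𝕜) : eLpNorm f 2 μ ^ 2 = ∫⁻ x, ‖f x‖ₑ ^ 2 ∂μ := by
  simpa using eLpNorm_nnreal_pow_eq_lintegral (f := f) (μ := μ) (p := 2) two_ne_zero

theorem enorm_integral_mul_le {f g : α → 𝕜} (hf : AEStronglyMeasurable f μ)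
    (hg : AEStronglyMeasurable g μ) :
    ‖∫ x, f x * g x ∂μ‖ₑ ≤ eLpNorm f 2 μ * eLpNorm g 2 μ := by
  calc ‖∫ x, f x * g x ∂μ‖ₑ ≤ eLpNorm (fun x => f x * g x) 1 μ :=
        (enorm_integral_le_lintegral_enorm _).trans_eq eLpNorm_one_eq_lintegral_enorm.symm
    _ ≤ eLpNorm f 2 μ * eLpNorm g 2 μ := by
        simpa using eLpNorm_le_eLpNorm_mul_eLpNorm'_of_norm hf hg (· * ·) 1
          (.of_forall fun x => by simp)

theorem MeasureTheory.MemLp.eLpNorm_two_eq_one {f : α → 𝕜} (hf : MemLp f 2 μ)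
    (h : ∫ x, ‖f x‖ ^ 2 ∂μ = 1) : eLpNorm f 2 μ = 1 := by
  simp [hf.eLpNorm_eq_integral_rpow_norm two_ne_zero ENNReal.ofNat_ne_top, h]

theorem MeasureTheory.MeasurePreserving.eLpNorm_comp_measurableEquiv {p : ℝ≥0∞} (e : α ≃ᵐ β)
    (he : MeasurePreserving e μ ν) (f : β → 𝕜) : eLpNorm (f ∘ e) p μ = eLpNorm f p ν := by
  rw [← he.map_eq, e.measurableEmbedding.eLpNorm_map_measure]

variable [SFinite ν]

theorem eLpNorm_two_sq_prod_mul_fst {v : α → 𝕜} {u : α × β → 𝕜} (hv : AEStronglyMeasurable v μ)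
    (hu : AEStronglyMeasurable u (μ.prod ν)) :
    eLpNorm (fun p => v p.1 * u p) 2 (μ.prod ν) ^ 2
      = ∫⁻ x, ‖v x‖ₑ ^ 2 * eLpNorm (fun y => u (x, y)) 2 ν ^ 2 ∂μ := by
  have hvu : AEMeasurable (fun p : α × β => ‖v p.1 * u p‖ₑ ^ 2) (μ.prod ν) :=
    ((hv.comp_fst.mul hu).enorm).pow_const 2
  rw [eLpNorm_two_sq_eq_lintegral, lintegral_prod _ hvu]
  refine lintegral_congr fun x => ?_
  simp_rw [enorm_mul, mul_pow]
  rw [lintegral_const_mul' _ _ (by simp), eLpNorm_two_sq_eq_lintegral]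

theorem lintegral_eLpNorm_two_sq_slice {F : α × β → 𝕜}
    (hF : AEStronglyMeasurable F (μ.prod ν)) :
    ∫⁻ x, eLpNorm (fun y => F (x, y)) 2 ν ^ 2 ∂μ = eLpNorm F 2 (μ.prod ν) ^ 2 := by
  simpa using
    (eLpNorm_two_sq_prod_mul_fst (v := fun _ => (1 : 𝕜)) aestronglyMeasurable_const hF).symm

def sliceInner (ν : Measure β) (ψ : β → 𝕜) (F : α × β → 𝕜) (x : α) : 𝕜 :=
  ∫ y, starRingEnd 𝕜 (ψ y) * F (x, y) ∂ν

def sliceProj (ν : Measure β) (ψ : β → 𝕜) (F : α × β → 𝕜) (p : α × β) : 𝕜 :=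
  ψ p.2 * sliceInner ν ψ F p.1

variable {ψ : β → 𝕜} {w F : α × β → 𝕜}

theorem MeasureTheory.AEStronglyMeasurable.sliceInner (hψ : AEStronglyMeasurable ψ ν)
    (hF : AEStronglyMeasurable F (μ.prod ν)) : AEStronglyMeasurable (sliceInner ν ψ F) μ :=
  ((RCLike.continuous_conj.comp_aestronglyMeasurable hψ).comp_snd.mul hF).integral_prod_right'

theorem ae_enorm_sliceInner_mul_le (hψ : AEStronglyMeasurable ψ ν)
    (hw : AEStronglyMeasurable w (μ.prod ν)) (hF : AEStronglyMeasurable F (μ.prod ν)) :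
    ∀ᵐ x ∂μ, ‖sliceInner ν ψ (fun p => w p * F p) x‖ₑ
      ≤ eLpNorm (fun y => w (x, y) * ψ y) 2 ν * eLpNorm (fun y => F (x, y)) 2 ν := by
  filter_upwards [hw.prodMk_left, hF.prodMk_left] with x hwx hFx
  have hconj : AEStronglyMeasurable (fun y => starRingEnd 𝕜 (ψ y) * w (x, y)) ν :=
    (RCLike.continuous_conj.comp_aestronglyMeasurable hψ).mul hwx
  calc ‖sliceInner ν ψ (fun p => w p * F p) x‖ₑ
      = ‖∫ y, starRingEnd 𝕜 (ψ y) * w (x, y) * F (x, y) ∂ν‖ₑ := by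
        simp only [sliceInner, mul_assoc]
    _ ≤ eLpNorm (fun y => starRingEnd 𝕜 (ψ y) * w (x, y)) 2 ν * eLpNorm (fun y => F (x, y)) 2 ν :=
        enorm_integral_mul_le hconj hFx
    _ = eLpNorm (fun y => w (x, y) * ψ y) 2 ν * eLpNorm (fun y => F (x, y)) 2 ν := by
        congr 1
        exact eLpNorm_congr_enorm_ae (.of_forall fun y => by simp [mul_comm])

theorem ae_enorm_sliceInner_le (hψ : AEStronglyMeasurable ψ ν)
    (hF : AEStronglyMeasurable F (μ.prod ν)) :
    ∀ᵐ x ∂μ, ‖sliceInner ν ψ F x‖ₑ ≤ eLpNorm ψ 2 ν * eLpNorm (fun y => F (x, y)) 2 ν := by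
  simpa using ae_enorm_sliceInner_mul_le hψ (aestronglyMeasurable_const (b := (1 : 𝕜))) hF

section Commutator

variable {c : ℝ≥0} (hψ : AEStronglyMeasurable ψ ν) (hw : AEStronglyMeasurable w (μ.prod ν))
  (hF : AEStronglyMeasurable F (μ.prod ν)) (hψ_norm : eLpNorm ψ 2 ν = 1)
  (hwψ : ∀ x, eLpNorm (fun y => w (x, y) * ψ y) 2 ν ≤ c)
include hψ hw hF hψ_norm hwψ

theorem eLpNorm_mul_sliceProj_le :
    eLpNorm (fun p => w p * sliceProj ν ψ F p) 2 (μ.prod ν)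
      ≤ c * eLpNorm F 2 (μ.prod ν) := by
  refine (ENNReal.pow_le_pow_left_iff two_ne_zero).1 ?_
  have hwψ' : AEStronglyMeasurable (fun p : α × β => w p * ψ p.2) (μ.prod ν) := hw.mul hψ.comp_snd
  calc eLpNorm (fun p => w p * sliceProj ν ψ F p) 2 (μ.prod ν) ^ 2
      = eLpNorm (fun p => sliceInner ν ψ F p.1 * (w p * ψ p.2)) 2 (μ.prod ν) ^ 2 := by
        simp only [sliceProj, mul_comm, mul_left_comm]
    _ = ∫⁻ x, ‖sliceInner ν ψ F x‖ₑ ^ 2 * eLpNorm (fun y => w (x, y) * ψ y) 2 ν ^ 2 ∂μ :=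
        eLpNorm_two_sq_prod_mul_fst (hψ.sliceInner hF) hwψ'
    _ ≤ ∫⁻ x, eLpNorm (fun y => F (x, y)) 2 ν ^ 2 * c ^ 2 ∂μ := by
        refine lintegral_mono_ae ?_
        filter_upwards [ae_enorm_sliceInner_le hψ hF] with x hx
        rw [hψ_norm, one_mul] at hx
        gcongr
        exact hwψ x
    _ = (c * eLpNorm F 2 (μ.prod ν)) ^ 2 := by
        rw [lintegral_mul_const' _ _ (by simp), lintegral_eLpNorm_two_sq_slice hF, mul_pow,
          mul_comm]

theorem eLpNorm_sliceProj_mul_le :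
    eLpNorm (sliceProj ν ψ (fun q => w q * F q)) 2 (μ.prod ν)
      ≤ c * eLpNorm F 2 (μ.prod ν) := by
  refine (ENNReal.pow_le_pow_left_iff two_ne_zero).1 ?_
  calc eLpNorm (sliceProj ν ψ (fun q => w q * F q)) 2 (μ.prod ν) ^ 2
      = eLpNorm (fun p => sliceInner ν ψ (fun q => w q * F q) p.1 * ψ p.2) 2 (μ.prod ν) ^ 2 := by
        congr 2 with p
        exact mul_comm _ _
    _ = ∫⁻ x, ‖sliceInner ν ψ (fun q => w q * F q) x‖ₑ ^ 2 ∂μ := by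
        rw [eLpNorm_two_sq_prod_mul_fst (hψ.sliceInner (F := fun q => w q * F q) (hw.mul hF))
          hψ.comp_snd]
        simp [hψ_norm]
    _ ≤ ∫⁻ x, eLpNorm (fun y => F (x, y)) 2 ν ^ 2 * c ^ 2 ∂μ := by
        refine lintegral_mono_ae ?_
        filter_upwards [ae_enorm_sliceInner_mul_le hψ hw hF] with x hx
        rw [← mul_pow, mul_comm]
        gcongr
        exact hx.trans (mul_le_mul_left (hwψ x) _)
    _ = (c * eLpNorm F 2 (μ.prod ν)) ^ 2 := by
        rw [lintegral_mul_const' _ _ (by simp), lintegral_eLpNorm_two_sq_slice hF, mul_pow,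
          mul_comm]

theorem eLpNorm_commutator_sliceProj_le :
    eLpNorm (fun p => w p * sliceProj ν ψ F p - sliceProj ν ψ (fun q => w q * F q) p)
        2 (μ.prod ν)
      ≤ 2 * c * eLpNorm F 2 (μ.prod ν) :=
  calc _ ≤ c * eLpNorm F 2 (μ.prod ν) + c * eLpNorm F 2 (μ.prod ν) :=
        (eLpNorm_sub_le (hw.mul (hψ.comp_snd.mul (hψ.sliceInner hF).comp_fst))
          (hψ.comp_snd.mul (hψ.sliceInner (hw.mul hF)).comp_fst) one_le_two).trans
        (add_le_add (eLpNorm_mul_sliceProj_le hψ hw hF hψ_norm hwψ)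
          (eLpNorm_sliceProj_mul_le hψ hw hF hψ_norm hwψ))
    _ = 2 * c * eLpNorm F 2 (μ.prod ν) := by ring

end Commutator

end Slice

theorem eLpNorm_ite_ball_mul_le {φ : Vec → ℂ} {C r : ℝ} (hφ : ∀ y, ‖φ y‖ ≤ C) (hr : 0 ≤ r)
    (a : Vec) :
    eLpNorm (fun y => (if ‖a - y‖ < r then (1 : ℂ) else 0) * φ y) 2 volume
      ≤ ENNReal.ofReal (√Real.pi * C * r) := by
  refine (ENNReal.pow_le_pow_left_iff two_ne_zero).1 ?_
  have hpt : ∀ y, ‖(if ‖a - y‖ < r then (1 : ℂ) else 0) * φ y‖ₑ ^ 2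
      ≤ (Metric.ball a r).indicator (fun _ => ENNReal.ofReal C ^ 2) y := by
    intro y
    by_cases hy : ‖a - y‖ < r
    · have hy' : y ∈ Metric.ball a r := by rwa [Metric.mem_ball, dist_eq_norm, norm_sub_rev]
      simp only [hy, if_true, one_mul, Set.indicator_of_mem hy']
      gcongr
      rw [← ofReal_norm]
      exact ENNReal.ofReal_le_ofReal (hφ y)
    · simp [hy]
  have hC : 0 ≤ C := (norm_nonneg _).trans (hφ 0)
  calc eLpNorm (fun y => (if ‖a - y‖ < r then (1 : ℂ) else 0) * φ y) 2 volume ^ 2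
      ≤ ∫⁻ y, (Metric.ball a r).indicator (fun _ => ENNReal.ofReal C ^ 2) y := by
        rw [eLpNorm_two_sq_eq_lintegral]
        exact lintegral_mono hpt
    _ = ENNReal.ofReal (√Real.pi * C * r) ^ 2 := by
        rw [lintegral_indicator_const measurableSet_ball, EuclideanSpace.volume_ball_fin_two,
          ← ENNReal.ofReal_pow hC, ← ENNReal.ofReal_pow hr, ← ENNReal.ofReal_mul (by positivity),
          ← ENNReal.ofReal_mul (by positivity), ← ENNReal.ofReal_pow (by positivity)]
        congr 1
        rw [mul_pow, mul_pow, Real.sq_sqrt Real.pi_pos.le]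
        ring

theorem pA_insertNth {n : ℕ} (φ : Vec → ℂ) (k : Fin (n + 1)) (Ψ : (Fin (n + 1) → Vec) → ℂ)
    (z : Fin n → Vec) (y : Vec) :
    pA (n + 1) φ k Ψ (k.insertNth y z)
      = sliceProj volume φ (fun p => Ψ (k.insertNth p.2 p.1)) (z, y) := by
  simp [pA, sliceProj, sliceInner, Fin.update_insertNth]

/-- For `j ≠ k`, the commutator of `p_k` with multiplication by the indicator of
`a_{j,k}^{(d)} = {|x_j - x_k| < N^{-d}}` has operator norm `≤ C ‖φ‖∞ N^{-d}`. -/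
theorem stmt_12 :
    ∃ C > (0 : ℝ), ∀ (N : ℕ) (d : ℝ), 0 < d → ∀ j k : Fin N, j ≠ k →
    ∀ (φ : Vec → ℂ) (Cφ : ℝ), MemLp φ 2 volume →
      (∫ y : Vec, ‖φ y‖ ^ 2) = 1 → (∀ y, ‖φ y‖ ≤ Cφ) →
    ∀ Ψ : (Fin N → Vec) → ℂ, MemLp Ψ 2 volume →
      eLpNorm (fun x : Fin N → Vec =>
          (if ‖x j - x k‖ < (N : ℝ) ^ (-d) then (1 : ℂ) else 0) * pA N φ k Ψ x
            - pA N φ k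
                (fun z => (if ‖z j - z k‖ < (N : ℝ) ^ (-d) then (1 : ℂ) else 0) * Ψ z) x)
          2 volume
        ≤ ENNReal.ofReal (C * Cφ * (N : ℝ) ^ (-d)) * eLpNorm Ψ 2 volume := by
  refine ⟨2 * √Real.pi, by positivity, fun N d _ j k hjk φ Cφ hφ hφ_norm hCφ Ψ hΨ => ?_⟩
  obtain ⟨n, rfl⟩ : ∃ n, N = n + 1 := ⟨N - 1, by have := j.pos; omega⟩
  obtain ⟨j', rfl⟩ := Fin.exists_succAbove_eq hjk
  set r : ℝ := ((n + 1 : ℕ) : ℝ) ^ (-d)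
  have hr : 0 ≤ r := Real.rpow_nonneg (Nat.cast_nonneg _) _
  let e : (Fin n → Vec) × Vec ≃ᵐ (Fin (n + 1) → Vec) :=
    MeasurableEquiv.prodComm.trans (MeasurableEquiv.piFinSuccAbove (fun _ => Vec) k).symm
  have he : MeasurePreserving e (volume.prod volume) volume :=
    (measurePreserving_piFinSuccAbove (fun _ : Fin (n + 1) => (volume : Measure Vec)) k).symm.comp
      Measure.measurePreserving_swap
  have he_apply : ∀ p, e p = k.insertNth p.2 p.1 := fun _ => rfl
  let w : (Fin n → Vec) × Vec → ℂ := fun p => if ‖p.1 j' - p.2‖ < r then 1 else 0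
  have hw : AEStronglyMeasurable w (volume.prod volume) :=
    (Measurable.ite (measurableSet_lt (by fun_prop) measurable_const) measurable_const
      measurable_const).aestronglyMeasurable
  rw [← he.eLpNorm_comp_measurableEquiv, ← he.eLpNorm_comp_measurableEquiv _ Ψ]
  convert eLpNorm_commutator_sliceProj_le (c := (√Real.pi * Cφ * r).toNNReal)
    hφ.1 hw (hΨ.1.comp_measurePreserving he) (hφ.eLpNorm_two_eq_one hφ_norm)
    (fun z => eLpNorm_ite_ball_mul_le hCφ hr (z j')) using 2
  · ext ⟨z, y⟩
    simp only [Function.comp_apply, he_apply, w, pA_insertNth, Fin.insertNth_apply_same,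
      Fin.insertNth_apply_succAbove]
    rfl
  · rw [mul_assoc, mul_assoc, ENNReal.ofReal_mul zero_le_two, ← mul_assoc]
    simp [ENNReal.ofReal]

end
end

section
/- Let $f_\beta$ be the zero-energy scattering state of $\tfrac12(V_N - M_\beta)$ with $f_\beta(x)=1$ for $|x|=R_\beta$, where $V_N(x) = e^{2N}V(e^Nx)$ has support of radius $\le e^{-N}\mathrm{diam}(\mathrm{supp}\,V)$ and $M_\beta$ is supported in the annulus $N^{-\beta} < |x| \le R_\beta$. If $f_\beta$ is nonnegative and monotone nondecreasing in $|x|$ with $f_\beta(N^{-\beta}) = j_{N,R_\beta}(N^{-\beta})/K_\beta$, $K_\beta \le 1$, and $j_{N,R_\beta}(N^{-\beta}) \ge 1 - C/N$, then $R_\beta \le C' N^{-\beta}$. -/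
/-!
With `ε = N^{-β}`, monotonicity gives `r f(r) ≥ ε f(ε) = ε j/K ≥ ε/(2K)` on the annulus, so the
integral is at least `ε (R - ε)/(2K)`. Since `β log N + log a = o(N)` and `R ≥ ε`, the factor
`N + log(R/a)` is at least `N/2` for large `N`, so the integral is at most `ε²/(πK)`.
Hence `R - ε ≤ 2ε/π < ε`, i.e. `R ≤ 2 N^{-β}`.
-/

open MeasureTheory Real Set Filter Asymptotics

theorem MonotoneOn.mul_sub_le_setIntegral_Ioc {g : ℝ → ℝ} {a b : ℝ} (hab : a ≤ b)
    (hg : MonotoneOn g (Icc a b)) : g a * (b - a) ≤ ∫ x in Ioc a b, g x := by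
  have hint : IntegrableOn g (Ioc a b) :=
    (intervalIntegrable_iff_integrableOn_Ioc_of_le hab).1
      (MonotoneOn.intervalIntegrable (by rwa [uIcc_of_le hab]))
  have h := setIntegral_ge_of_const_le_real measurableSet_Ioc measure_Ioc_lt_top.ne
    (fun x hx => hg (left_mem_Icc.2 hab) (Ioc_subset_Icc_self hx) hx.1.le) hint
  rwa [Real.volume_real_Ioc_of_le hab] at h

lemma eventually_mul_log_add_le_half (β c : ℝ) :
    ∀ᶠ x : ℝ in atTop, β * log x + c ≤ x / 2 := by
  have ho : (fun x => β * log x + c) =o[atTop] id :=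
    (isLittleO_log_id_atTop.const_mul_left β).add (isLittleO_const_id_atTop c)
  filter_upwards [ho.bound (by norm_num : (0:ℝ) < 1 / 2), eventually_ge_atTop 0] with x hx hx0
  calc β * log x + c ≤ ‖β * log x + c‖ := le_abs_self _
    _ ≤ 1 / 2 * ‖x‖ := hx
    _ = x / 2 := by rw [Real.norm_of_nonneg hx0]; ring

lemma half_le_add_log_div {x β a R : ℝ} (hx : 0 < x) (ha : 0 < a) (hR : x ^ (-β) ≤ R)
    (hlog : β * log x + log a ≤ x / 2) : x / 2 ≤ x + log (R / a) := by
  have hlogR : -β * log x ≤ log R := by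
    rw [← Real.log_rpow hx]
    exact Real.log_le_log (rpow_pos_of_pos hx _) hR
  rw [Real.log_div (rpow_pos_of_pos hx _ |>.trans_le hR).ne' ha.ne']
  linarith

lemma rpow_one_sub_two_mul_div_le {x β K D : ℝ} (hx : 0 < x) (hK : 0 < K) (hD : x / 2 ≤ D) :
    x ^ (1 - 2 * β) / (2 * π * K * D) ≤ (x ^ (-β)) ^ 2 / (π * K) := by
  have hsplit : x ^ (1 - 2 * β) = x * (x ^ (-β)) ^ 2 := by
    rw [show 1 - 2 * β = 1 + (-β + -β) by ring, rpow_add hx, rpow_one, rpow_add hx, sq]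
  have hD0 : 0 < D := by linarith
  rw [hsplit, div_le_div_iff₀ (by positivity) (by positivity)]
  have : 0 ≤ π * K * (x ^ (-β)) ^ 2 := by positivity
  nlinarith

lemma le_two_mul_of_mul_sub_le {ε K j R : ℝ} (hε : 0 < ε) (hK : 0 < K) (hj : 1 / 2 ≤ j)
    (h : ε * (j / K) * (R - ε) ≤ ε ^ 2 / (π * K)) : R ≤ 2 * ε := by
  by_contra! hR
  have hlow : ε ^ 2 / (2 * K) < ε * (j / K) * (R - ε) := by
    rw [div_lt_iff₀ (by positivity)]
    have : ε * (j / K) * (R - ε) * (2 * K) = ε * (2 * j) * (R - ε) := by field_simp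
    have hRε : 0 < R - ε := by linarith
    calc ε ^ 2 < ε * (R - ε) := by nlinarith
      _ ≤ ε * (2 * j) * (R - ε) := by nlinarith [mul_pos hε hRε]
      _ = _ := this.symm
  have hπ : ε ^ 2 / (π * K) < ε ^ 2 / (2 * K) :=
    div_lt_div_of_pos_left (by positivity) (by positivity)
      (mul_lt_mul_of_pos_right (by linarith [pi_gt_three]) hK)
  linarith

theorem stmt_17_general (β a C : ℝ) (ha : 0 < a) :
    ∃ C' > (0 : ℝ), ∃ N₀ : ℕ, ∀ N : ℕ, N₀ ≤ N →
    ∀ (f : ℝ → ℝ) (Kβ Rβ jval : ℝ),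
      (∀ r, 0 ≤ f r) →
      (∀ r s : ℝ, 0 ≤ r → r ≤ s → f r ≤ f s) →
      0 < Kβ → Kβ ≤ 1 →
      (N : ℝ) ^ (-β) < Rβ →
      f ((N : ℝ) ^ (-β)) = jval / Kβ →
      1 - C / N ≤ jval → jval ≤ 1 →
      (∫ r in Set.Ioc ((N : ℝ) ^ (-β)) Rβ, r * f r) =
        (N : ℝ) ^ (1 - 2 * β) / (2 * Real.pi * Kβ * ((N : ℝ) + Real.log (Rβ / a))) →
      Rβ ≤ C' * (N : ℝ) ^ (-β) := by
  have hev : ∀ᶠ x : ℝ in atTop, (0 < x ∧ C / x ≤ 1 / 2) ∧ β * log x + log a ≤ x / 2 :=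
    ((eventually_gt_atTop 0).and ((tendsto_const_nhds.div_atTop tendsto_id).eventually_le_const
      (by norm_num))).and (eventually_mul_log_add_le_half β _)
  obtain ⟨N₀, hN₀⟩ := eventually_atTop.1 (tendsto_natCast_atTop_atTop.eventually hev)
  refine ⟨2, two_pos, N₀, fun N hN f K R j hf0 hf hK _ hR hfε hj _ hint => ?_⟩
  obtain ⟨⟨hN0, hCN⟩, hlog⟩ := hN₀ N hN
  set ε := (N : ℝ) ^ (-β)
  have hε : 0 < ε := rpow_pos_of_pos hN0 _
  have hmono : MonotoneOn (fun r => r * f r) (Icc ε R) :=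
    monotoneOn_id.mul (fun r hr s _ hrs => hf r s (hε.le.trans hr.1) hrs)
      (fun r hr => hε.le.trans hr.1) (fun r _ => hf0 r)
  have hlow := hmono.mul_sub_le_setIntegral_Ioc hR.le
  simp only [hfε, hint] at hlow
  exact le_two_mul_of_mul_sub_le hε hK (by linarith) (hlow.trans
    (rpow_one_sub_two_mul_div_le hN0 hK (half_le_add_log_div hN0 ha hR.le hlog)))

/-- If the radial profile `f` of the zero-energy scattering state is nonnegative and
monotone nondecreasing, `f(N^{-β}) = j_{N,R_β}(N^{-β})/K_β` with `K_β ≤ 1` and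
`j_{N,R_β}(N^{-β}) ≥ 1 - C/N`, and the cancellation condition yields
`∫_{N^{-β}}^{R_β} r f(r) dr = N^{1-2β} / (2π K_β (N + ln(R_β/a)))`, then
`R_β ≤ C' N^{-β}`. -/
theorem stmt_17 (β a C : ℝ) (hβ : 0 < β) (ha : 0 < a) (hC : 0 < C) :
    ∃ C' > (0 : ℝ), ∃ N₀ : ℕ, ∀ N : ℕ, N₀ ≤ N →
    ∀ (f : ℝ → ℝ) (Kβ Rβ jval : ℝ),
      (∀ r, 0 ≤ f r) →
      (∀ r s : ℝ, 0 ≤ r → r ≤ s → f r ≤ f s) →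
      0 < Kβ → Kβ ≤ 1 →
      (N : ℝ) ^ (-β) < Rβ →
      f ((N : ℝ) ^ (-β)) = jval / Kβ →
      1 - C / N ≤ jval → jval ≤ 1 →
      (∫ r in Set.Ioc ((N : ℝ) ^ (-β)) Rβ, r * f r) =
        (N : ℝ) ^ (1 - 2 * β) / (2 * Real.pi * Kβ * ((N : ℝ) + Real.log (Rβ / a))) →
      Rβ ≤ C' * (N : ℝ) ^ (-β) :=
  stmt_17_general β a C ha
end
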